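/- In the setting of the quadratic Toda bracket on ℂ[A_k, B_k : k ∈ ℤ/N] ({A_k,A_{k+1}}=B_k, {B_k,A_{k+1}}=B_kA_{k+1}, {B_k,A_k}=−B_kA_k, {B_k,B_{k+1}}=B_kB_{k+1}, others zero, indices mod N), with ζ = exp(2πi/N) and B̂_n = (1/N)Σ_k ζ^{−nk}B_k, Â_s = (1/N)Σ_l ζ^{−sl}A_l, the following hold: {B̂_n, B̂_m} = (1/N) Σ_{r+s ≡ n+m (mod N)} B̂_r B̂_s (ζ^{−m+s} − ζ^{−n+s}), and {B̂_n, Â_m} = (1/N) Σ_{r+s ≡ n+m (mod N)} B̂_r Â_s (ζ^{−m+s} − 1). -/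
import Mathlib


open MvPolynomial

/-- The variable A_k in ℂ[A_k, B_k : k ∈ ℤ/N]. -/
noncomputable def Agen (N : ℕ) (k : ZMod N) : MvPolynomial (ZMod N × Bool) ℂ :=
  MvPolynomial.X (k, false)

/-- The variable B_k in ℂ[A_k, B_k : k ∈ ℤ/N]. -/
noncomputable def Bgen (N : ℕ) (k : ZMod N) : MvPolynomial (ZMod N × Bool) ℂ :=
  MvPolynomial.X (k, true)

/-- ζ_N = exp(2πi/N). -/
noncomputable def zetaN (N : ℕ) : ℂ := Complex.exp (2 * Real.pi * Complex.I / N)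

/-- The Fourier mode Â_n = (1/N) Σ_{l∈ℤ/N} ζ^{−nl} A_l. -/
noncomputable def Ahat (N : ℕ) (n : ℤ) : MvPolynomial (ZMod N × Bool) ℂ :=
  ((N : ℂ))⁻¹ • ∑ l ∈ Finset.range N, (zetaN N ^ (-(n * (l : ℤ)))) • Agen N (l : ZMod N)

/-- The Fourier mode B̂_m = (1/N) Σ_{k∈ℤ/N} ζ^{−mk} B_k. -/
noncomputable def Bhat (N : ℕ) (m : ℤ) : MvPolynomial (ZMod N × Bool) ℂ :=
  ((N : ℂ))⁻¹ • ∑ k ∈ Finset.range N, (zetaN N ^ (-(m * (k : ℤ)))) • Bgen N (k : ZMod N)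

section aux
variable (N : ℕ) [NeZero N]

lemma zeta_prim : IsPrimitiveRoot (zetaN N) N :=
  Complex.isPrimitiveRoot_exp N (NeZero.ne N)

lemma zeta_ne_zero : zetaN N ≠ 0 := Complex.exp_ne_zero _

lemma c_add (a b : ℤ) : zetaN N ^ (a + b) = zetaN N ^ a * zetaN N ^ b :=
  zpow_add₀ (zeta_ne_zero N) a b

lemma c_eq_of {a b : ℤ} (h : (a : ZMod N) = (b : ZMod N)) :
    zetaN N ^ a = zetaN N ^ b := by
  have hd : (N : ℤ) ∣ a - b := by
    rwa [← ZMod.intCast_zmod_eq_zero_iff_dvd, Int.cast_sub, sub_eq_zero]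
  have h1 : zetaN N ^ (a - b) = 1 := ((zeta_prim N).zpow_eq_one_iff_dvd _).mpr hd
  have := zeta_ne_zero N
  calc zetaN N ^ a = zetaN N ^ (a - b) * zetaN N ^ b := by
        rw [← zpow_add₀ this]; ring_nf
    _ = zetaN N ^ b := by rw [h1, one_mul]

lemma cp3 (a b c a' b' c' : ℤ) (h : ((a + b + c : ℤ) : ZMod N) = ((a' + b' + c' : ℤ) : ZMod N)) :
    zetaN N ^ a * zetaN N ^ b * zetaN N ^ c = zetaN N ^ a' * zetaN N ^ b' * zetaN N ^ c' := by
  rw [← c_add, ← c_add, ← c_add, ← c_add]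
  exact c_eq_of N h

lemma cp2 (a b a' b' : ℤ) (h : ((a + b : ℤ) : ZMod N) = ((a' + b' : ℤ) : ZMod N)) :
    zetaN N ^ a * zetaN N ^ b = zetaN N ^ a' * zetaN N ^ b' := by
  rw [← c_add, ← c_add]
  exact c_eq_of N h

lemma sum_val {M : Type*} [AddCommMonoid M] (f : ℕ → M) :
    ∑ s : ZMod N, f (s.val) = ∑ i ∈ Finset.range N, f i := by
  refine Finset.sum_nbij' (i := fun s => s.val) (j := fun i => (i : ZMod N))
    ?_ ?_ ?_ ?_ ?_
  · intro a _; exact Finset.mem_range.mpr (ZMod.val_lt a)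
  · intro a _; exact Finset.mem_univ _
  · intro a _; exact (ZMod.natCast_val a).trans (ZMod.cast_id _ _)
  · intro i hi; exact ZMod.val_cast_of_lt (Finset.mem_range.mp hi)
  · intro a _; rfl

lemma csum (t : ℤ) :
    ∑ s : ZMod N, zetaN N ^ (t * (s.val : ℤ)) =
      if ((t : ZMod N) = 0) then (N : ℂ) else 0 := by
  have hz := zeta_prim N
  have h1 : ∀ s : ZMod N, zetaN N ^ (t * (s.val : ℤ)) = (zetaN N ^ t) ^ s.val := by
    intro s; rw [zpow_mul, zpow_natCast]
  simp only [h1]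
  rw [sum_val N (fun i => (zetaN N ^ t) ^ i)]
  by_cases hdvd : (t : ZMod N) = 0
  · have : zetaN N ^ t = 1 := (hz.zpow_eq_one_iff_dvd t).mpr
      ((ZMod.intCast_zmod_eq_zero_iff_dvd t N).mp hdvd)
    simp [this, hdvd]
  · have hne : zetaN N ^ t ≠ 1 := fun h => hdvd <|
      (ZMod.intCast_zmod_eq_zero_iff_dvd t N).mpr ((hz.zpow_eq_one_iff_dvd t).mp h)
    rw [if_neg hdvd, geom_sum_eq hne]
    have hN1 : (zetaN N ^ t) ^ N = 1 := by
      rw [← zpow_natCast, ← zpow_mul, mul_comm, zpow_mul, zpow_natCast, hz.pow_eq_one, one_zpow]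
    rw [hN1, sub_self, zero_div]

lemma val_cast_zmod (s : ZMod N) : ((s.val : ℕ) : ZMod N) = s :=
  (ZMod.natCast_val s).trans (ZMod.cast_id _ _)

lemma Bhat_eq (n : ℤ) :
    Bhat N n = (N : ℂ)⁻¹ • ∑ s : ZMod N, zetaN N ^ (-(n * (s.val : ℤ))) • Bgen N s := by
  rw [Bhat, ← sum_val N (fun i => zetaN N ^ (-(n * (i : ℤ))) • Bgen N (i : ZMod N))]
  congr 1
  refine Finset.sum_congr rfl fun s _ => ?_
  rw [val_cast_zmod]

lemma Ahat_eq (n : ℤ) :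
    Ahat N n = (N : ℂ)⁻¹ • ∑ s : ZMod N, zetaN N ^ (-(n * (s.val : ℤ))) • Agen N s := by
  rw [Ahat, ← sum_val N (fun i => zetaN N ^ (-(n * (i : ℤ))) • Agen N (i : ZMod N))]
  congr 1
  refine Finset.sum_congr rfl fun s _ => ?_
  rw [val_cast_zmod]

lemma filter_reindex (v : ℤ) {M : Type*} [AddCommMonoid M] (F : ℕ → ℕ → M) :
    ∑ p ∈ (Finset.range N ×ˢ Finset.range N).filter
        (fun p => ((p.1 + p.2 : ℕ) : ZMod N) = ((v : ℤ) : ZMod N)),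
      F p.1 p.2
    = ∑ s : ZMod N, F (((v : ZMod N) - s).val) s.val := by
  refine Finset.sum_nbij' (i := fun p => ((p.2 : ZMod N)))
    (j := fun s => ((((v : ZMod N) - s).val), s.val)) ?_ ?_ ?_ ?_ ?_
  · intro a _; exact Finset.mem_univ _
  · intro s _
    simp only [Finset.mem_filter, Finset.mem_product, Finset.mem_range]
    refine ⟨⟨ZMod.val_lt _, ZMod.val_lt _⟩, ?_⟩
    push_cast
    rw [val_cast_zmod, val_cast_zmod]
    have : ((v : ℤ) : ZMod N) = (v : ZMod N) := by push_cast; ring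
    rw [this]; ring
  · rintro ⟨p1, p2⟩ hp
    simp only [Finset.mem_filter, Finset.mem_product, Finset.mem_range] at hp
    obtain ⟨⟨h1, h2⟩, h3⟩ := hp
    have hp1 : ((p1 : ℕ) : ZMod N) = (v : ZMod N) - ((p2 : ℕ) : ZMod N) := by
      have : ((v : ℤ) : ZMod N) = (v : ZMod N) := by push_cast; ring
      rw [this] at h3
      push_cast at h3 ⊢
      linear_combination h3
    simp only [Prod.mk.injEq]
    constructor
    · rw [← hp1, ZMod.val_cast_of_lt h1]
    · exact ZMod.val_cast_of_lt h2
  · intro s _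
    simp only
    rw [val_cast_zmod]
  · rintro ⟨p1, p2⟩ hp
    simp only [Finset.mem_filter, Finset.mem_product, Finset.mem_range] at hp
    obtain ⟨⟨h1, h2⟩, h3⟩ := hp
    have hp1 : ((p1 : ℕ) : ZMod N) = (v : ZMod N) - ((p2 : ℕ) : ZMod N) := by
      have : ((v : ℤ) : ZMod N) = (v : ZMod N) := by push_cast; ring
      rw [this] at h3
      push_cast at h3 ⊢
      linear_combination h3
    simp only
    rw [← hp1, ZMod.val_cast_of_lt h1, ZMod.val_cast_of_lt h2]

end aux

section expand
variable (N : ℕ) [NeZero N]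

lemma br_expand (br : MvPolynomial (ZMod N × Bool) ℂ →ₗ[ℂ] MvPolynomial (ZMod N × Bool) ℂ →ₗ[ℂ]
      MvPolynomial (ZMod N × Bool) ℂ) (c d : ℂ) (f g : ZMod N → ℂ)
    (X Y : ZMod N → MvPolynomial (ZMod N × Bool) ℂ) :
    br (c • ∑ k : ZMod N, f k • X k) (d • ∑ l : ZMod N, g l • Y l)
      = ∑ k : ZMod N, ∑ l : ZMod N, ((c * d) * (f k * g l)) • br (X k) (Y l) := by
  simp only [map_smul, map_sum, LinearMap.smul_apply, LinearMap.sum_apply, Finset.smul_sum,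
    smul_smul]
  rw [Finset.sum_comm]
  refine Finset.sum_congr rfl fun k _ => Finset.sum_congr rfl fun l _ => ?_
  congr 1
  ring

lemma mul_expand (c d : ℂ) (f g : ZMod N → ℂ)
    (X Y : ZMod N → MvPolynomial (ZMod N × Bool) ℂ) :
    (c • ∑ k : ZMod N, f k • X k) * (d • ∑ l : ZMod N, g l • Y l)
      = ∑ k : ZMod N, ∑ l : ZMod N, ((c * d) * (f k * g l)) • (X k * Y l) := by
  rw [smul_mul_smul_comm, Finset.sum_mul_sum, Finset.smul_sum]
  refine Finset.sum_congr rfl fun k _ => ?_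
  rw [Finset.smul_sum]
  refine Finset.sum_congr rfl fun l _ => ?_
  rw [smul_mul_smul_comm, smul_smul]

end expand

lemma part1 (N : ℕ) [NeZero N] (h3 : 3 ≤ N)
    (br : MvPolynomial (ZMod N × Bool) ℂ →ₗ[ℂ] MvPolynomial (ZMod N × Bool) ℂ →ₗ[ℂ]
      MvPolynomial (ZMod N × Bool) ℂ)
    (hanti : ∀ x y, br x y = -br y x)
    (hBB : ∀ k : ZMod N, br (Bgen N k) (Bgen N (k + 1)) = Bgen N k * Bgen N (k + 1))
    (hBB0 : ∀ k l : ZMod N, l ≠ k + 1 → k ≠ l + 1 → br (Bgen N k) (Bgen N l) = 0)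
    (n m : ℤ) :
    br (Bhat N n) (Bhat N m)
      = ((N : ℂ))⁻¹ •
          ∑ p ∈ (Finset.range N ×ˢ Finset.range N).filter
              (fun p => ((p.1 + p.2 : ℕ) : ZMod N) = ((n + m : ℤ) : ZMod N)),
            (zetaN N ^ (-m + (p.2 : ℤ)) - zetaN N ^ (-n + (p.2 : ℤ))) •
              (Bhat N (p.1 : ℤ) * Bhat N (p.2 : ℤ)) := by
  have hNC : (N : ℂ) ≠ 0 := Nat.cast_ne_zero.mpr (NeZero.ne N)
  have htwo : (2 : ZMod N) ≠ 0 := by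
    intro h
    have h2 : ((2 : ℕ) : ZMod N) = 0 := by exact_mod_cast h
    have := (ZMod.natCast_eq_zero_iff 2 N).mp h2
    have := Nat.le_of_dvd two_pos this
    omega
  have hBBval : ∀ k l : ZMod N, br (Bgen N k) (Bgen N l)
      = (if l = k + 1 then Bgen N k * Bgen N (k + 1) else 0)
        - (if k = l + 1 then Bgen N l * Bgen N (l + 1) else 0) := by
    intro k l
    by_cases h1 : l = k + 1
    · have h2 : k ≠ l + 1 := by
        intro h
        apply htwo
        rw [h1, add_assoc] at h
        have := (left_eq_add.mp h)
        rw [← this]; ring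
      rw [if_pos h1, if_neg h2, sub_zero, h1, hBB]
    · by_cases h2 : k = l + 1
      · rw [if_neg h1, if_pos h2, zero_sub, h2, hanti]
        rw [hBB]
      · rw [if_neg h1, if_neg h2, sub_zero, hBB0 k l h1 h2]
  -- common middle expression
  have hL : br (Bhat N n) (Bhat N m)
      = ∑ k : ZMod N, (((N : ℂ)⁻¹ * (N : ℂ)⁻¹) *
          ((zetaN N ^ (-m) - zetaN N ^ (-n)) * zetaN N ^ (-((n + m) * (k.val : ℤ))))) •
            (Bgen N k * Bgen N (k + 1)) := by
    rw [Bhat_eq, Bhat_eq, br_expand]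
    have step1 : ∀ k : ZMod N,
        ∑ l : ZMod N, (((N : ℂ)⁻¹ * (N : ℂ)⁻¹) *
            (zetaN N ^ (-(n * (k.val : ℤ))) * zetaN N ^ (-(m * (l.val : ℤ))))) •
              br (Bgen N k) (Bgen N l)
          = (((N : ℂ)⁻¹ * (N : ℂ)⁻¹) *
              (zetaN N ^ (-(n * (k.val : ℤ))) * zetaN N ^ (-(m * (((k + 1 : ZMod N)).val : ℤ))))) •
                (Bgen N k * Bgen N (k + 1))
            - (((N : ℂ)⁻¹ * (N : ℂ)⁻¹) *
                (zetaN N ^ (-(n * (k.val : ℤ))) * zetaN N ^ (-(m * (((k - 1 : ZMod N)).val : ℤ))))) •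
                  (Bgen N (k - 1) * Bgen N k) := by
      intro k
      simp only [hBBval, smul_sub]
      rw [Finset.sum_sub_distrib]
      congr 1
      · simp only [smul_ite, smul_zero]
        rw [Fintype.sum_ite_eq' (k + 1)
          (fun l => (((N : ℂ)⁻¹ * (N : ℂ)⁻¹) *
            (zetaN N ^ (-(n * (k.val : ℤ))) * zetaN N ^ (-(m * (l.val : ℤ))))) •
              (Bgen N k * Bgen N (k + 1)))]
      · simp only [show ∀ l : ZMod N, (k = l + 1) = (l = k - 1) from
          fun l => propext ⟨fun h => by rw [h]; ring, fun h => by rw [h]; ring⟩]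
        simp only [smul_ite, smul_zero]
        rw [Fintype.sum_ite_eq' (k - 1)
          (fun l => (((N : ℂ)⁻¹ * (N : ℂ)⁻¹) *
            (zetaN N ^ (-(n * (k.val : ℤ))) * zetaN N ^ (-(m * (l.val : ℤ))))) •
              (Bgen N l * Bgen N (l + 1)))]
        have : k - 1 + 1 = k := by ring
        rw [this]
    rw [Finset.sum_congr rfl fun k _ => step1 k, Finset.sum_sub_distrib]
    have hre : (∑ k : ZMod N, (((N : ℂ)⁻¹ * (N : ℂ)⁻¹) *
            (zetaN N ^ (-(n * (k.val : ℤ))) * zetaN N ^ (-(m * (((k - 1 : ZMod N)).val : ℤ))))) •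
              (Bgen N (k - 1) * Bgen N k))
        = ∑ k : ZMod N, (((N : ℂ)⁻¹ * (N : ℂ)⁻¹) *
            (zetaN N ^ (-(n * (((k + 1 : ZMod N)).val : ℤ))) * zetaN N ^ (-(m * (k.val : ℤ))))) •
              (Bgen N k * Bgen N (k + 1)) := by
      refine (Fintype.sum_equiv (Equiv.addRight (1 : ZMod N)) _ _ fun x => ?_).symm
      simp only [Equiv.coe_addRight]
      have h1 : x + 1 - 1 = x := by ring
      rw [h1]
    rw [hre, ← Finset.sum_sub_distrib]
    refine Finset.sum_congr rfl fun k _ => ?_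
    rw [← sub_smul]
    congr 1
    have e1 : zetaN N ^ (-(n * (k.val : ℤ))) * zetaN N ^ (-(m * (((k + 1 : ZMod N)).val : ℤ)))
        = zetaN N ^ (-m) * zetaN N ^ (-((n + m) * (k.val : ℤ))) := by
      apply cp2
      push_cast [val_cast_zmod]
      ring
    have e2 : zetaN N ^ (-(n * (((k + 1 : ZMod N)).val : ℤ))) * zetaN N ^ (-(m * (k.val : ℤ)))
        = zetaN N ^ (-n) * zetaN N ^ (-((n + m) * (k.val : ℤ))) := by
      apply cp2
      push_cast [val_cast_zmod]
      ring
    linear_combination ((N : ℂ)⁻¹ * (N : ℂ)⁻¹) * e1 - ((N : ℂ)⁻¹ * (N : ℂ)⁻¹) * e2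
  have hkey : ∀ k l : ZMod N,
      (∑ s : ZMod N, ((zetaN N ^ (-m + (s.val : ℤ)) - zetaN N ^ (-n + (s.val : ℤ))) *
          (((N : ℂ)⁻¹ * (N : ℂ)⁻¹) *
            (zetaN N ^ (-(((((n + m : ℤ) : ZMod N) - s).val : ℤ) * (k.val : ℤ))) *
             zetaN N ^ (-((s.val : ℤ) * (l.val : ℤ)))))))
      = if l = k + 1 then ((N : ℂ)⁻¹ * (N : ℂ)⁻¹ * N) *
          ((zetaN N ^ (-m) - zetaN N ^ (-n)) * zetaN N ^ (-((n + m) * (k.val : ℤ)))) else 0 := by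
    intro k l
    have hps : ∀ s : ZMod N,
        (zetaN N ^ (-m + (s.val : ℤ)) - zetaN N ^ (-n + (s.val : ℤ))) *
          (((N : ℂ)⁻¹ * (N : ℂ)⁻¹) *
            (zetaN N ^ (-(((((n + m : ℤ) : ZMod N) - s).val : ℤ) * (k.val : ℤ))) *
             zetaN N ^ (-((s.val : ℤ) * (l.val : ℤ)))))
        = ((N : ℂ)⁻¹ * (N : ℂ)⁻¹) *
            (((zetaN N ^ (-m) - zetaN N ^ (-n)) * zetaN N ^ (-((n + m) * (k.val : ℤ)))) *
              zetaN N ^ ((1 + (k.val : ℤ) - (l.val : ℤ)) * (s.val : ℤ))) := by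
      intro s
      have e1 : zetaN N ^ (-m + (s.val : ℤ)) *
            zetaN N ^ (-(((((n + m : ℤ) : ZMod N) - s).val : ℤ) * (k.val : ℤ))) *
            zetaN N ^ (-((s.val : ℤ) * (l.val : ℤ)))
          = zetaN N ^ (-m) * zetaN N ^ (-((n + m) * (k.val : ℤ))) *
            zetaN N ^ ((1 + (k.val : ℤ) - (l.val : ℤ)) * (s.val : ℤ)) := by
        apply cp3
        push_cast [val_cast_zmod]
        ring
      have e2 : zetaN N ^ (-n + (s.val : ℤ)) *
            zetaN N ^ (-(((((n + m : ℤ) : ZMod N) - s).val : ℤ) * (k.val : ℤ))) *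
            zetaN N ^ (-((s.val : ℤ) * (l.val : ℤ)))
          = zetaN N ^ (-n) * zetaN N ^ (-((n + m) * (k.val : ℤ))) *
            zetaN N ^ ((1 + (k.val : ℤ) - (l.val : ℤ)) * (s.val : ℤ)) := by
        apply cp3
        push_cast [val_cast_zmod]
        ring
      linear_combination ((N : ℂ)⁻¹ * (N : ℂ)⁻¹) * e1 - ((N : ℂ)⁻¹ * (N : ℂ)⁻¹) * e2
    rw [Finset.sum_congr rfl fun s _ => hps s, ← Finset.mul_sum, ← Finset.mul_sum,
      csum N (1 + (k.val : ℤ) - (l.val : ℤ))]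
    have hcond : ((((1 : ℤ) + (k.val : ℤ) - (l.val : ℤ) : ℤ) : ZMod N) = 0) = (l = k + 1) := by
      apply propext
      constructor
      · intro h
        push_cast [val_cast_zmod] at h
        linear_combination -h
      · intro h
        rw [h]
        push_cast [val_cast_zmod]
        ring
    simp only [hcond]
    by_cases hl : l = k + 1
    · simp only [if_pos hl]
      ring
    · simp only [if_neg hl, mul_zero]
  have hR : ((N : ℂ))⁻¹ •
          ∑ p ∈ (Finset.range N ×ˢ Finset.range N).filter
              (fun p => ((p.1 + p.2 : ℕ) : ZMod N) = ((n + m : ℤ) : ZMod N)),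
            (zetaN N ^ (-m + (p.2 : ℤ)) - zetaN N ^ (-n + (p.2 : ℤ))) •
              (Bhat N (p.1 : ℤ) * Bhat N (p.2 : ℤ))
      = ∑ k : ZMod N, (((N : ℂ)⁻¹ * (N : ℂ)⁻¹) *
          ((zetaN N ^ (-m) - zetaN N ^ (-n)) * zetaN N ^ (-((n + m) * (k.val : ℤ))))) •
            (Bgen N k * Bgen N (k + 1)) := by
    calc ((N : ℂ))⁻¹ •
          ∑ p ∈ (Finset.range N ×ˢ Finset.range N).filter
              (fun p => ((p.1 + p.2 : ℕ) : ZMod N) = ((n + m : ℤ) : ZMod N)),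
            (zetaN N ^ (-m + (p.2 : ℤ)) - zetaN N ^ (-n + (p.2 : ℤ))) •
              (Bhat N (p.1 : ℤ) * Bhat N (p.2 : ℤ))
        = ((N : ℂ))⁻¹ • ∑ s : ZMod N,
            (zetaN N ^ (-m + ((s.val : ℕ) : ℤ)) - zetaN N ^ (-n + ((s.val : ℕ) : ℤ))) •
              (Bhat N (((((n + m : ℤ) : ZMod N) - s).val : ℕ) : ℤ) * Bhat N ((s.val : ℕ) : ℤ)) :=
          congrArg (fun z => ((N : ℂ))⁻¹ • z)
            (filter_reindex N (n + m) (fun a b =>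
              (zetaN N ^ (-m + (b : ℤ)) - zetaN N ^ (-n + (b : ℤ))) •
                (Bhat N (a : ℤ) * Bhat N (b : ℤ))))
      _ = ((N : ℂ))⁻¹ • ∑ s : ZMod N, ∑ k : ZMod N, ∑ l : ZMod N,
            ((zetaN N ^ (-m + (s.val : ℤ)) - zetaN N ^ (-n + (s.val : ℤ))) *
              (((N : ℂ)⁻¹ * (N : ℂ)⁻¹) *
                (zetaN N ^ (-(((((n + m : ℤ) : ZMod N) - s).val : ℤ) * (k.val : ℤ))) *
                 zetaN N ^ (-((s.val : ℤ) * (l.val : ℤ)))))) • (Bgen N k * Bgen N l) := by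
          refine congrArg _ (Finset.sum_congr rfl fun s _ => ?_)
          rw [Bhat_eq, Bhat_eq, mul_expand, Finset.smul_sum]
          refine Finset.sum_congr rfl fun k _ => ?_
          rw [Finset.smul_sum]
          refine Finset.sum_congr rfl fun l _ => ?_
          rw [smul_smul]
      _ = ((N : ℂ))⁻¹ • ∑ k : ZMod N, ∑ l : ZMod N, ∑ s : ZMod N,
            ((zetaN N ^ (-m + (s.val : ℤ)) - zetaN N ^ (-n + (s.val : ℤ))) *
              (((N : ℂ)⁻¹ * (N : ℂ)⁻¹) *
                (zetaN N ^ (-(((((n + m : ℤ) : ZMod N) - s).val : ℤ) * (k.val : ℤ))) *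
                 zetaN N ^ (-((s.val : ℤ) * (l.val : ℤ)))))) • (Bgen N k * Bgen N l) := by
          refine congrArg _ ?_
          rw [Finset.sum_comm]
          exact Finset.sum_congr rfl fun k _ => Finset.sum_comm
      _ = ((N : ℂ))⁻¹ • ∑ k : ZMod N, ∑ l : ZMod N,
            (if l = k + 1 then ((N : ℂ)⁻¹ * (N : ℂ)⁻¹ * N) *
              ((zetaN N ^ (-m) - zetaN N ^ (-n)) * zetaN N ^ (-((n + m) * (k.val : ℤ)))) else 0) •
              (Bgen N k * Bgen N l) := by
          refine congrArg _ (Finset.sum_congr rfl fun k _ => Finset.sum_congr rfl fun l _ => ?_)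
          rw [← Finset.sum_smul, hkey k l]
      _ = ((N : ℂ))⁻¹ • ∑ k : ZMod N,
            (((N : ℂ)⁻¹ * (N : ℂ)⁻¹ * N) *
              ((zetaN N ^ (-m) - zetaN N ^ (-n)) * zetaN N ^ (-((n + m) * (k.val : ℤ))))) •
              (Bgen N k * Bgen N (k + 1)) := by
          refine congrArg _ (Finset.sum_congr rfl fun k _ => ?_)
          simp only [ite_smul, zero_smul]
          rw [Fintype.sum_ite_eq' (k + 1) (fun l =>
            (((N : ℂ)⁻¹ * (N : ℂ)⁻¹ * N) *
              ((zetaN N ^ (-m) - zetaN N ^ (-n)) * zetaN N ^ (-((n + m) * (k.val : ℤ))))) •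
              (Bgen N k * Bgen N l))]
      _ = ∑ k : ZMod N, (((N : ℂ)⁻¹ * (N : ℂ)⁻¹) *
            ((zetaN N ^ (-m) - zetaN N ^ (-n)) * zetaN N ^ (-((n + m) * (k.val : ℤ))))) •
              (Bgen N k * Bgen N (k + 1)) := by
          rw [Finset.smul_sum]
          refine Finset.sum_congr rfl fun k _ => ?_
          rw [smul_smul]
          congr 1
          field_simp
  rw [hL]
  exact hR.symm

lemma part2 (N : ℕ) [NeZero N] (h3 : 3 ≤ N)
    (br : MvPolynomial (ZMod N × Bool) ℂ →ₗ[ℂ] MvPolynomial (ZMod N × Bool) ℂ →ₗ[ℂ]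
      MvPolynomial (ZMod N × Bool) ℂ)
    (hBA : ∀ k : ZMod N, br (Bgen N k) (Agen N (k + 1)) = Bgen N k * Agen N (k + 1))
    (hBA' : ∀ k : ZMod N, br (Bgen N k) (Agen N k) = -(Bgen N k * Agen N k))
    (hBA0 : ∀ k l : ZMod N, l ≠ k → l ≠ k + 1 → br (Bgen N k) (Agen N l) = 0)
    (n m : ℤ) :
    br (Bhat N n) (Ahat N m)
      = ((N : ℂ))⁻¹ •
          ∑ p ∈ (Finset.range N ×ˢ Finset.range N).filter
              (fun p => ((p.1 + p.2 : ℕ) : ZMod N) = ((n + m : ℤ) : ZMod N)),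
            (zetaN N ^ (-m + (p.2 : ℤ)) - 1) • (Bhat N (p.1 : ℤ) * Ahat N (p.2 : ℤ)) := by
  have hNC : (N : ℂ) ≠ 0 := Nat.cast_ne_zero.mpr (NeZero.ne N)
  have hone : (1 : ZMod N) ≠ 0 := by
    intro h
    have h2 : ((1 : ℕ) : ZMod N) = 0 := by exact_mod_cast h
    have := (ZMod.natCast_eq_zero_iff 1 N).mp h2
    have := Nat.le_of_dvd one_pos this
    omega
  have hBAval : ∀ k l : ZMod N, br (Bgen N k) (Agen N l)
      = (if l = k + 1 then Bgen N k * Agen N (k + 1) else 0)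
        - (if l = k then Bgen N k * Agen N k else 0) := by
    intro k l
    by_cases h1 : l = k + 1
    · have h2 : l ≠ k := by
        intro hlk
        apply hone
        have hkk : k + 1 = k := by rw [← h1, hlk]
        linear_combination hkk
      rw [if_pos h1, if_neg h2, sub_zero, h1, hBA]
    · by_cases h2 : l = k
      · rw [if_neg h1, if_pos h2, zero_sub, h2, hBA']
      · rw [if_neg h1, if_neg h2, sub_zero, hBA0 k l h2 h1]
  have hL : br (Bhat N n) (Ahat N m)
      = ∑ k : ZMod N,
          ((((N : ℂ)⁻¹ * (N : ℂ)⁻¹) * (zetaN N ^ (-m) * zetaN N ^ (-((n + m) * (k.val : ℤ))))) •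
              (Bgen N k * Agen N (k + 1))
            - (((N : ℂ)⁻¹ * (N : ℂ)⁻¹) * zetaN N ^ (-((n + m) * (k.val : ℤ)))) •
              (Bgen N k * Agen N k)) := by
    rw [Bhat_eq, Ahat_eq, br_expand]
    refine Finset.sum_congr rfl fun k _ => ?_
    simp only [hBAval, smul_sub]
    rw [Finset.sum_sub_distrib]
    congr 1
    · simp only [smul_ite, smul_zero]
      rw [Fintype.sum_ite_eq' (k + 1) (fun l =>
        (((N : ℂ)⁻¹ * (N : ℂ)⁻¹) *
          (zetaN N ^ (-(n * (k.val : ℤ))) * zetaN N ^ (-(m * (l.val : ℤ))))) •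
            (Bgen N k * Agen N (k + 1)))]
      congr 1
      have e1 : zetaN N ^ (-(n * (k.val : ℤ))) * zetaN N ^ (-(m * (((k + 1 : ZMod N)).val : ℤ)))
          = zetaN N ^ (-m) * zetaN N ^ (-((n + m) * (k.val : ℤ))) := by
        apply cp2
        push_cast [val_cast_zmod]
        ring
      linear_combination ((N : ℂ)⁻¹ * (N : ℂ)⁻¹) * e1
    · simp only [smul_ite, smul_zero]
      rw [Fintype.sum_ite_eq' k (fun l =>
        (((N : ℂ)⁻¹ * (N : ℂ)⁻¹) *
          (zetaN N ^ (-(n * (k.val : ℤ))) * zetaN N ^ (-(m * (l.val : ℤ))))) •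
            (Bgen N k * Agen N k))]
      congr 1
      have e2 : zetaN N ^ (-(n * (k.val : ℤ))) * zetaN N ^ (-(m * (k.val : ℤ)))
          = zetaN N ^ (-((n + m) * (k.val : ℤ))) := by
        rw [← c_add]
        congr 1
        ring
      linear_combination ((N : ℂ)⁻¹ * (N : ℂ)⁻¹) * e2
  have hkey : ∀ k l : ZMod N,
      (∑ s : ZMod N, ((zetaN N ^ (-m + (s.val : ℤ)) - 1) *
          (((N : ℂ)⁻¹ * (N : ℂ)⁻¹) *
            (zetaN N ^ (-(((((n + m : ℤ) : ZMod N) - s).val : ℤ) * (k.val : ℤ))) *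
             zetaN N ^ (-((s.val : ℤ) * (l.val : ℤ)))))))
      = (if l = k + 1 then ((N : ℂ)⁻¹ * (N : ℂ)⁻¹ * N) *
            (zetaN N ^ (-m) * zetaN N ^ (-((n + m) * (k.val : ℤ)))) else 0)
        - (if l = k then ((N : ℂ)⁻¹ * (N : ℂ)⁻¹ * N) *
            zetaN N ^ (-((n + m) * (k.val : ℤ))) else 0) := by
    intro k l
    have hps : ∀ s : ZMod N,
        (zetaN N ^ (-m + (s.val : ℤ)) - 1) *
          (((N : ℂ)⁻¹ * (N : ℂ)⁻¹) *
            (zetaN N ^ (-(((((n + m : ℤ) : ZMod N) - s).val : ℤ) * (k.val : ℤ))) *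
             zetaN N ^ (-((s.val : ℤ) * (l.val : ℤ)))))
        = ((N : ℂ)⁻¹ * (N : ℂ)⁻¹) *
            ((zetaN N ^ (-m) * zetaN N ^ (-((n + m) * (k.val : ℤ)))) *
              zetaN N ^ ((1 + (k.val : ℤ) - (l.val : ℤ)) * (s.val : ℤ)))
          - ((N : ℂ)⁻¹ * (N : ℂ)⁻¹) *
            (zetaN N ^ (-((n + m) * (k.val : ℤ))) *
              zetaN N ^ (((k.val : ℤ) - (l.val : ℤ)) * (s.val : ℤ))) := by
      intro s
      have e1 : zetaN N ^ (-m + (s.val : ℤ)) *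
            zetaN N ^ (-(((((n + m : ℤ) : ZMod N) - s).val : ℤ) * (k.val : ℤ))) *
            zetaN N ^ (-((s.val : ℤ) * (l.val : ℤ)))
          = zetaN N ^ (-m) * zetaN N ^ (-((n + m) * (k.val : ℤ))) *
            zetaN N ^ ((1 + (k.val : ℤ) - (l.val : ℤ)) * (s.val : ℤ)) := by
        apply cp3
        push_cast [val_cast_zmod]
        ring
      have e2 : zetaN N ^ (-(((((n + m : ℤ) : ZMod N) - s).val : ℤ) * (k.val : ℤ))) *
            zetaN N ^ (-((s.val : ℤ) * (l.val : ℤ)))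
          = zetaN N ^ (-((n + m) * (k.val : ℤ))) *
            zetaN N ^ (((k.val : ℤ) - (l.val : ℤ)) * (s.val : ℤ)) := by
        apply cp2
        push_cast [val_cast_zmod]
        ring
      linear_combination ((N : ℂ)⁻¹ * (N : ℂ)⁻¹) * e1 - ((N : ℂ)⁻¹ * (N : ℂ)⁻¹) * e2
    rw [Finset.sum_congr rfl fun s _ => hps s, Finset.sum_sub_distrib,
      ← Finset.mul_sum, ← Finset.mul_sum, ← Finset.mul_sum, ← Finset.mul_sum,
      csum N (1 + (k.val : ℤ) - (l.val : ℤ)), csum N ((k.val : ℤ) - (l.val : ℤ))]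
    have hcond1 : ((((1 : ℤ) + (k.val : ℤ) - (l.val : ℤ) : ℤ) : ZMod N) = 0) = (l = k + 1) := by
      apply propext
      constructor
      · intro h
        push_cast [val_cast_zmod] at h
        linear_combination -h
      · intro h
        rw [h]
        push_cast [val_cast_zmod]
        ring
    have hcond2 : ((((k.val : ℤ) - (l.val : ℤ) : ℤ) : ZMod N) = 0) = (l = k) := by
      apply propext
      constructor
      · intro h
        push_cast [val_cast_zmod] at h
        linear_combination -h
      · intro h
        rw [h]
        push_cast [val_cast_zmod]
        ring
    simp only [hcond1, hcond2]
    by_cases hl1 : l = k + 1 <;> by_cases hl2 : l = k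
    · rw [if_pos hl1, if_pos hl1, if_pos hl2, if_pos hl2]; ring
    · rw [if_pos hl1, if_pos hl1, if_neg hl2, if_neg hl2]; ring
    · rw [if_neg hl1, if_neg hl1, if_pos hl2, if_pos hl2]; ring
    · rw [if_neg hl1, if_neg hl1, if_neg hl2, if_neg hl2]; ring
  have hR : ((N : ℂ))⁻¹ •
          ∑ p ∈ (Finset.range N ×ˢ Finset.range N).filter
              (fun p => ((p.1 + p.2 : ℕ) : ZMod N) = ((n + m : ℤ) : ZMod N)),
            (zetaN N ^ (-m + (p.2 : ℤ)) - 1) • (Bhat N (p.1 : ℤ) * Ahat N (p.2 : ℤ))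
      = ∑ k : ZMod N,
          ((((N : ℂ)⁻¹ * (N : ℂ)⁻¹) * (zetaN N ^ (-m) * zetaN N ^ (-((n + m) * (k.val : ℤ))))) •
              (Bgen N k * Agen N (k + 1))
            - (((N : ℂ)⁻¹ * (N : ℂ)⁻¹) * zetaN N ^ (-((n + m) * (k.val : ℤ)))) •
              (Bgen N k * Agen N k)) := by
    calc ((N : ℂ))⁻¹ •
          ∑ p ∈ (Finset.range N ×ˢ Finset.range N).filter
              (fun p => ((p.1 + p.2 : ℕ) : ZMod N) = ((n + m : ℤ) : ZMod N)),
            (zetaN N ^ (-m + (p.2 : ℤ)) - 1) • (Bhat N (p.1 : ℤ) * Ahat N (p.2 : ℤ))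
        = ((N : ℂ))⁻¹ • ∑ s : ZMod N,
            (zetaN N ^ (-m + ((s.val : ℕ) : ℤ)) - 1) •
              (Bhat N (((((n + m : ℤ) : ZMod N) - s).val : ℕ) : ℤ) * Ahat N ((s.val : ℕ) : ℤ)) :=
          congrArg (fun z => ((N : ℂ))⁻¹ • z)
            (filter_reindex N (n + m) (fun a b =>
              (zetaN N ^ (-m + (b : ℤ)) - 1) • (Bhat N (a : ℤ) * Ahat N (b : ℤ))))
      _ = ((N : ℂ))⁻¹ • ∑ s : ZMod N, ∑ k : ZMod N, ∑ l : ZMod N,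
            ((zetaN N ^ (-m + (s.val : ℤ)) - 1) *
              (((N : ℂ)⁻¹ * (N : ℂ)⁻¹) *
                (zetaN N ^ (-(((((n + m : ℤ) : ZMod N) - s).val : ℤ) * (k.val : ℤ))) *
                 zetaN N ^ (-((s.val : ℤ) * (l.val : ℤ)))))) • (Bgen N k * Agen N l) := by
          refine congrArg _ (Finset.sum_congr rfl fun s _ => ?_)
          rw [Bhat_eq, Ahat_eq, mul_expand, Finset.smul_sum]
          refine Finset.sum_congr rfl fun k _ => ?_
          rw [Finset.smul_sum]
          refine Finset.sum_congr rfl fun l _ => ?_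
          rw [smul_smul]
      _ = ((N : ℂ))⁻¹ • ∑ k : ZMod N, ∑ l : ZMod N, ∑ s : ZMod N,
            ((zetaN N ^ (-m + (s.val : ℤ)) - 1) *
              (((N : ℂ)⁻¹ * (N : ℂ)⁻¹) *
                (zetaN N ^ (-(((((n + m : ℤ) : ZMod N) - s).val : ℤ) * (k.val : ℤ))) *
                 zetaN N ^ (-((s.val : ℤ) * (l.val : ℤ)))))) • (Bgen N k * Agen N l) := by
          refine congrArg _ ?_
          rw [Finset.sum_comm]
          exact Finset.sum_congr rfl fun k _ => Finset.sum_comm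
      _ = ((N : ℂ))⁻¹ • ∑ k : ZMod N, ∑ l : ZMod N,
            ((if l = k + 1 then ((N : ℂ)⁻¹ * (N : ℂ)⁻¹ * N) *
                (zetaN N ^ (-m) * zetaN N ^ (-((n + m) * (k.val : ℤ)))) else 0)
              - (if l = k then ((N : ℂ)⁻¹ * (N : ℂ)⁻¹ * N) *
                  zetaN N ^ (-((n + m) * (k.val : ℤ))) else 0)) • (Bgen N k * Agen N l) := by
          refine congrArg _ (Finset.sum_congr rfl fun k _ => Finset.sum_congr rfl fun l _ => ?_)
          rw [← Finset.sum_smul, hkey k l]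
      _ = ((N : ℂ))⁻¹ • ∑ k : ZMod N,
            ((((N : ℂ)⁻¹ * (N : ℂ)⁻¹ * N) *
                (zetaN N ^ (-m) * zetaN N ^ (-((n + m) * (k.val : ℤ))))) •
              (Bgen N k * Agen N (k + 1))
            - (((N : ℂ)⁻¹ * (N : ℂ)⁻¹ * N) * zetaN N ^ (-((n + m) * (k.val : ℤ)))) •
              (Bgen N k * Agen N k)) := by
          refine congrArg _ (Finset.sum_congr rfl fun k _ => ?_)
          simp only [sub_smul, ite_smul, zero_smul]
          rw [Finset.sum_sub_distrib]
          congr 1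
          · rw [Fintype.sum_ite_eq' (k + 1) (fun l =>
              (((N : ℂ)⁻¹ * (N : ℂ)⁻¹ * N) *
                (zetaN N ^ (-m) * zetaN N ^ (-((n + m) * (k.val : ℤ))))) •
                (Bgen N k * Agen N l))]
          · rw [Fintype.sum_ite_eq' k (fun l =>
              (((N : ℂ)⁻¹ * (N : ℂ)⁻¹ * N) * zetaN N ^ (-((n + m) * (k.val : ℤ)))) •
                (Bgen N k * Agen N l))]
      _ = ∑ k : ZMod N,
          ((((N : ℂ)⁻¹ * (N : ℂ)⁻¹) * (zetaN N ^ (-m) * zetaN N ^ (-((n + m) * (k.val : ℤ))))) •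
              (Bgen N k * Agen N (k + 1))
            - (((N : ℂ)⁻¹ * (N : ℂ)⁻¹) * zetaN N ^ (-((n + m) * (k.val : ℤ)))) •
              (Bgen N k * Agen N k)) := by
          rw [Finset.smul_sum]
          refine Finset.sum_congr rfl fun k _ => ?_
          rw [smul_sub, smul_smul, smul_smul]
          congr 2
          · field_simp
          · field_simp
  rw [hL]
  exact hR.symm

lemma absurd2
    (br : MvPolynomial (ZMod 2 × Bool) ℂ →ₗ[ℂ] MvPolynomial (ZMod 2 × Bool) ℂ →ₗ[ℂ]
      MvPolynomial (ZMod 2 × Bool) ℂ)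
    (hanti : ∀ x y, br x y = -br y x)
    (hBB : ∀ k : ZMod 2, br (Bgen 2 k) (Bgen 2 (k + 1)) = Bgen 2 k * Bgen 2 (k + 1)) :
    False := by
  have h1 := hBB 0
  have h2 := hBB 1
  rw [show ((1 : ZMod 2) + 1) = 0 by decide] at h2
  rw [show ((0 : ZMod 2) + 1) = 1 by decide] at h1
  rw [hanti, h2] at h1
  have h4 : Bgen 2 0 * Bgen 2 1 + Bgen 2 0 * Bgen 2 1 = 0 := by linear_combination - h1
  have h5 : (2 : ℂ) • (Bgen 2 0 * Bgen 2 1) = 0 := by rw [two_smul]; exact h4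
  rcases smul_eq_zero.mp h5 with h | h
  · exact absurd h (by norm_num)
  · refine mul_ne_zero ?_ ?_ h
    · simp only [Bgen]
      exact MvPolynomial.X_ne_zero (R := ℂ) _
    · simp only [Bgen]
      exact MvPolynomial.X_ne_zero (R := ℂ) _

/-- §5.4: for the quadratic Toda Poisson bracket,
{B̂_n, B̂_m} = (1/N) Σ_{r+s ≡ n+m (N)} B̂_r B̂_s (ζ^{−m+s} − ζ^{−n+s}) and
{B̂_n, Â_m} = (1/N) Σ_{r+s ≡ n+m (N)} B̂_r Â_s (ζ^{−m+s} − 1). -/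
theorem stmt_7 (N : ℕ) [NeZero N] (hN : 2 ≤ N)
    (br : MvPolynomial (ZMod N × Bool) ℂ →ₗ[ℂ] MvPolynomial (ZMod N × Bool) ℂ →ₗ[ℂ]
      MvPolynomial (ZMod N × Bool) ℂ)
    (hanti : ∀ x y, br x y = -br y x)
    (hleib : ∀ x y z, br x (y * z) = br x y * z + y * br x z)
    (hAA : ∀ k : ZMod N, br (Agen N k) (Agen N (k + 1)) = Bgen N k)
    (hAA0 : ∀ k l : ZMod N, l ≠ k + 1 → k ≠ l + 1 → br (Agen N k) (Agen N l) = 0)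
    (hBA : ∀ k : ZMod N, br (Bgen N k) (Agen N (k + 1)) = Bgen N k * Agen N (k + 1))
    (hBA' : ∀ k : ZMod N, br (Bgen N k) (Agen N k) = -(Bgen N k * Agen N k))
    (hBA0 : ∀ k l : ZMod N, l ≠ k → l ≠ k + 1 → br (Bgen N k) (Agen N l) = 0)
    (hBB : ∀ k : ZMod N, br (Bgen N k) (Bgen N (k + 1)) = Bgen N k * Bgen N (k + 1))
    (hBB0 : ∀ k l : ZMod N, l ≠ k + 1 → k ≠ l + 1 → br (Bgen N k) (Bgen N l) = 0)
    (n m : ℤ) :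
    br (Bhat N n) (Bhat N m)
      = ((N : ℂ))⁻¹ •
          ∑ p ∈ (Finset.range N ×ˢ Finset.range N).filter
              (fun p => ((p.1 + p.2 : ℕ) : ZMod N) = ((n + m : ℤ) : ZMod N)),
            (zetaN N ^ (-m + (p.2 : ℤ)) - zetaN N ^ (-n + (p.2 : ℤ))) •
              (Bhat N (p.1 : ℤ) * Bhat N (p.2 : ℤ)) ∧
    br (Bhat N n) (Ahat N m)
      = ((N : ℂ))⁻¹ •
          ∑ p ∈ (Finset.range N ×ˢ Finset.range N).filter
              (fun p => ((p.1 + p.2 : ℕ) : ZMod N) = ((n + m : ℤ) : ZMod N)),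
            (zetaN N ^ (-m + (p.2 : ℤ)) - 1) • (Bhat N (p.1 : ℤ) * Ahat N (p.2 : ℤ)) := by
  rcases Nat.lt_or_ge N 3 with hlt | h3
  · have hN2 : N = 2 := by omega
    subst hN2
    exact (absurd2 br hanti hBB).elim
  · exact ⟨part1 N h3 br hanti hBB hBB0 n m, part2 N h3 br hBA hBA' hBA0 n m⟩
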